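/- Let G be an impartial game in which every maximal play sequence (sequence of moves from G to an ended position) has even length. Then G ≈ 0. -/

import Mathlib

/-!
The second player wins by answering a move `v` with a vertex `w` such that `{v, w}` is a face:
a facet through `v` has even size, so it contains such a `w`. After these two moves the position
is the game of the double link `lk (lk Δ v) w`, whose facets are the facets of `Δ` through
`{v, w}` with `v` and `w` removed, so they are again of even size and induction applies.
-/

universe u

namespace SetTheory

/-- Pre-game (as in the older Mathlib, removed since). -/
inductive PGame : Type (u + 1)
  | mk : ∀ α β : Type u, (α → PGame) → (β → PGame) → PGame

namespace PGame

/-- The pair (`x ≤ y`, `x ⧏ y`), defined as in the older Mathlib. -/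
noncomputable def le_lf (x : PGame.{u}) : PGame.{u} → Prop × Prop :=
  PGame.rec (motive := fun _ => PGame.{u} → Prop × Prop)
    (fun xl xr xL xR IHxl IHxr y =>
      PGame.rec (motive := fun _ => Prop × Prop)
        (fun yl yr yL yR IHyl IHyr =>
          ((∀ i, (IHxl i (mk yl yr yL yR)).2) ∧ ∀ j, (IHyr j).2,
            (∃ i, (IHyl i).1) ∨ ∃ j, (IHxr j (mk yl yr yL yR)).1)) y) x

instance : LE PGame.{u} :=
  ⟨fun x y => (le_lf x y).1⟩

/-- Equivalence of pre-games: `x ≤ y ∧ y ≤ x`. -/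
def Equiv (x y : PGame.{u}) : Prop :=
  x ≤ y ∧ y ≤ x

instance : HasEquiv PGame.{u} :=
  ⟨Equiv⟩

instance : Zero PGame.{u} :=
  ⟨⟨PEmpty, PEmpty, PEmpty.elim, PEmpty.elim⟩⟩

end PGame

end SetTheory

open SetTheory PGame
open scoped PGame

variable {V : Type} [DecidableEq V]

/-- A (finite) simplicial complex: a downward-closed family of finite sets of vertices. -/
def IsComplex (Δ : Finset (Finset V)) : Prop :=
  ∀ F ∈ Δ, ∀ F' ⊆ F, F' ∈ Δ

/-- `F` is a facet (maximal face) of `Δ`. -/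
def IsFacet (Δ : Finset (Finset V)) (F : Finset V) : Prop :=
  F ∈ Δ ∧ ∀ F' ∈ Δ, F ⊆ F' → F = F'

/-- The link of a vertex `v` in `Δ`: faces `F` with `v ∉ F` and `F ∪ {v} ∈ Δ`. -/
def linkC (Δ : Finset (Finset V)) (v : V) : Finset (Finset V) :=
  Δ.filter fun F => v ∉ F ∧ insert v F ∈ Δ

theorem linkC_sup_lt (Δ : Finset (Finset V)) (v : V) (hv : {v} ∈ Δ) :
    (linkC Δ v).sup Finset.card < Δ.sup Finset.card := by
  have h1 : (1 : ℕ) ≤ Δ.sup Finset.card := by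
    simpa using Finset.le_sup (f := Finset.card) hv
  refine (Finset.sup_lt_iff (by simp only [bot_eq_zero]; omega)).2 ?_
  intro F hF
  simp only [linkC, Finset.mem_filter] at hF
  obtain ⟨-, hvF, hins⟩ := hF
  have h2 := Finset.le_sup (f := Finset.card) hins
  rw [Finset.card_insert_of_notMem hvF] at h2
  omega

/-- The impartial strong placement game of a simplicial complex: both players' moves are to
the links of the vertices of `Δ`. -/
def SPGame (Δ : Finset (Finset V)) : PGame :=
  ⟨{v : V // {v} ∈ Δ}, {v : V // {v} ∈ Δ},
    fun v => SPGame (linkC Δ v.1), fun v => SPGame (linkC Δ v.1)⟩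
termination_by Δ.sup Finset.card
decreasing_by all_goals exact linkC_sup_lt Δ v.1 v.2

namespace SetTheory.PGame

theorem mk_equiv_zero_of_forall_exists_reply {α : Type u} {f : α → PGame.{u}}
    (h : ∀ a, ∃ (β : Type u) (g : β → PGame.{u}) (b : β), f a = mk β β g g ∧ g b ≈ 0) :
    mk α α f f ≈ 0 := by
  constructor
  · refine ⟨fun a => ?_, fun j => j.elim⟩
    obtain ⟨β, g, b, hfa, hb⟩ := h a
    show (le_lf (f a) 0).2
    rw [hfa]
    exact Or.inr ⟨b, hb.1⟩
  · refine ⟨fun i => i.elim, fun a => ?_⟩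
    obtain ⟨β, g, b, hfa, hb⟩ := h a
    show (le_lf 0 (f a)).2
    rw [hfa]
    exact Or.inl ⟨b, hb.2⟩

end SetTheory.PGame

section Complex

variable {Δ : Finset (Finset V)}

omit [DecidableEq V] in
theorem exists_superset_isFacet {F : Finset V} (hF : F ∈ Δ) : ∃ G, F ⊆ G ∧ IsFacet Δ G := by
  obtain ⟨G, hFG, hGΔ, hGmax⟩ := Δ.exists_le_maximal hF
  exact ⟨G, hFG, hGΔ, fun F' hF' hGF' => hGF'.antisymm (hGmax hF' hGF')⟩

theorem isComplex_linkC (hΔ : IsComplex Δ) (v : V) : IsComplex (linkC Δ v) := by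
  intro F hF F' hF'F
  simp only [linkC, Finset.mem_filter] at hF ⊢
  obtain ⟨hFΔ, hvF, hvFΔ⟩ := hF
  exact ⟨hΔ F hFΔ F' hF'F, fun hvF' => hvF (hF'F hvF'),
    hΔ _ hvFΔ _ (Finset.insert_subset_insert v hF'F)⟩

theorem IsComplex.singleton_mem_linkC (hΔ : IsComplex Δ) {G : Finset V} (hG : G ∈ Δ) {v w : V}
    (hv : v ∈ G) (hw : w ∈ G) (hwv : w ≠ v) : {w} ∈ linkC Δ v := by
  simp only [linkC, Finset.mem_filter, Finset.mem_singleton]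
  exact ⟨hΔ G hG _ (Finset.singleton_subset_iff.2 hw), fun hvw => hwv hvw.symm,
    hΔ G hG _ (Finset.insert_subset hv (Finset.singleton_subset_iff.2 hw))⟩

theorem IsComplex.isFacet_insert_of_isFacet_linkC (hΔ : IsComplex Δ) {v : V} {G : Finset V}
    (hG : IsFacet (linkC Δ v) G) : v ∉ G ∧ IsFacet Δ (insert v G) := by
  obtain ⟨hG, hGmax⟩ := hG
  simp only [linkC, Finset.mem_filter] at hG
  obtain ⟨-, hvG, hvGΔ⟩ := hG
  refine ⟨hvG, hvGΔ, fun F hF hvGF => ?_⟩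
  have hvF : v ∈ F := hvGF (Finset.mem_insert_self v G)
  have hFv : F.erase v ∈ linkC Δ v := by
    simp only [linkC, Finset.mem_filter, Finset.insert_erase hvF]
    exact ⟨hΔ F hF _ (Finset.erase_subset v F), Finset.notMem_erase v F, hF⟩
  have hGF : G ⊆ F.erase v :=
    Finset.subset_erase.2 ⟨(Finset.insert_subset_iff.1 hvGF).2, hvG⟩
  rw [hGmax _ hFv hGF, Finset.insert_erase hvF]

theorem IsComplex.exists_singleton_mem_linkC (hΔ : IsComplex Δ)
    (h : ∀ F : Finset V, IsFacet Δ F → Even F.card) {v : V} (hv : {v} ∈ Δ) :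
    ∃ w, {w} ∈ linkC Δ v := by
  obtain ⟨G, hvG, hG⟩ := exists_superset_isFacet hv
  have hvG : v ∈ G := Finset.singleton_subset_iff.1 hvG
  have hG_card : 1 < G.card := by
    have := Finset.card_pos.2 ⟨v, hvG⟩
    have := h G hG
    grind
  obtain ⟨w, hwG, hwv⟩ := Finset.exists_mem_ne hG_card v
  exact ⟨w, hΔ.singleton_mem_linkC hG.1 hvG hwG hwv⟩

theorem IsComplex.even_card_of_isFacet_linkC_linkC (hΔ : IsComplex Δ)
    (h : ∀ F : Finset V, IsFacet Δ F → Even F.card) {v w : V} :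
    ∀ G : Finset V, IsFacet (linkC (linkC Δ v) w) G → Even G.card := by
  intro G hG
  obtain ⟨hwG, hG⟩ := (isComplex_linkC hΔ v).isFacet_insert_of_isFacet_linkC hG
  obtain ⟨hvwG, hG⟩ := hΔ.isFacet_insert_of_isFacet_linkC hG
  have := h _ hG
  rw [Finset.card_insert_of_notMem hvwG, Finset.card_insert_of_notMem hwG] at this
  simpa [Nat.even_add_one] using this

end Complex

/-- If every facet of `Δ` has even cardinality, then the impartial strong placement game of
`Δ` is equivalent to `0`. -/
theorem spGame_equiv_zero_of_even_facets (Δ : Finset (Finset V)) (hΔ : IsComplex Δ)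
    (h : ∀ F : Finset V, IsFacet Δ F → Even F.card) : SPGame Δ ≈ 0 := by
  rw [SPGame.eq_1]
  refine mk_equiv_zero_of_forall_exists_reply fun v => ?_
  obtain ⟨w, hw⟩ := hΔ.exists_singleton_mem_linkC h v.2
  refine ⟨_, _, (⟨w, hw⟩ : {u // {u} ∈ linkC Δ v.1}), SPGame.eq_1 _, ?_⟩
  exact spGame_equiv_zero_of_even_facets _ (isComplex_linkC (isComplex_linkC hΔ v.1) w)
    (hΔ.even_card_of_isFacet_linkC_linkC h)
termination_by Δ.sup Finset.card
decreasing_by exact (linkC_sup_lt _ w hw).trans (linkC_sup_lt Δ v.1 v.2)
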